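/- arXiv:math/0702874 — 2 statements merged into one kernel-verified Lean document; each statement's English description precedes it below -/
import Mathlib

section
/- Let n > 0 be a fixed integer with prime factorization n = p_1^{a_1}···p_k^{a_k}, and let Q be a torsion, commutative, diassociative loop in which x^n ∈ Z(Q) for every x ∈ Q. Then: (a) for each i, every element x of the p_i-primary component Q_{p_i} satisfies x^{p_i^{a_i}} ∈ Z(Q); (b) every element of Q whose order is coprime to n lies in Z(Q), and the set Q' of such elements is a subloop that is an abelian group; (c) Q is the internal direct product of the subloops Q_{p_1}, …, Q_{p_k} and Q'. -/
universe u

namespace CRIFPaper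

/-- A loop: a set with a binary operation and a neutral element `1` in which
all left and right translations are bijections (equivalently, the equations
`a * x = b` and `y * a = b` have unique solutions). -/
class Loop (Q : Type u) extends Mul Q, One Q where
  one_mul : ∀ x : Q, 1 * x = x
  mul_one : ∀ x : Q, x * 1 = x
  mulLeft_bijective : ∀ a : Q, Function.Bijective (fun x : Q => a * x)
  mulRight_bijective : ∀ a : Q, Function.Bijective (fun x : Q => x * a)

/-- A loop equipped with a two-sided inverse map (as is the case for
commutative diassociative loops). -/
class InvLoop (Q : Type u) extends Loop Q, Inv Q where
  mul_inv : ∀ x : Q, x * x⁻¹ = 1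
  inv_mul : ∀ x : Q, x⁻¹ * x = 1

/-- Powers in a loop (left-bracketed; in diassociative loops powers are
unambiguous and agree with this bracketing). -/
def lpow {Q : Type u} [Mul Q] [One Q] (x : Q) : ℕ → Q
  | 0 => 1
  | n + 1 => lpow x n * x

/-- The order of an element: the least `n > 0` with `x ^ n = 1`. -/
noncomputable def ord {Q : Type u} [Mul Q] [One Q] (x : Q) : ℕ :=
  sInf {n : ℕ | 0 < n ∧ lpow x n = 1}

/-- A loop is torsion if every element has finite order. -/
def Torsion (Q : Type u) [Mul Q] [One Q] : Prop :=
  ∀ x : Q, ∃ n : ℕ, 0 < n ∧ lpow x n = 1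

/-- The `p`-primary component: elements whose order is a power of `p`. -/
def primary (Q : Type u) [Mul Q] [One Q] (p : ℕ) : Set Q :=
  {x : Q | ∃ k : ℕ, ord x = p ^ k}

/-- A subloop: a subset containing `1` closed under multiplication and inverses. -/
def IsSubloop {Q : Type u} [Mul Q] [One Q] [Inv Q] (S : Set Q) : Prop :=
  (1 : Q) ∈ S ∧ (∀ a ∈ S, ∀ b ∈ S, a * b ∈ S) ∧ ∀ a ∈ S, a⁻¹ ∈ S

/-- Normality of a subloop of a commutative loop: for all `a ∈ S` and `x y`,
the unique `d` with `(x * y) * d = x * (y * a)` lies in `S`. -/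
def IsNormalSubloop {Q : Type u} [Mul Q] [One Q] [Inv Q] (S : Set Q) : Prop :=
  IsSubloop S ∧ ∀ a ∈ S, ∀ x y d : Q, (x * y) * d = x * (y * a) → d ∈ S

/-- The subloop generated by a subset: the smallest subloop containing it. -/
def genSubloop {Q : Type u} [Mul Q] [One Q] [Inv Q] (T : Set Q) : Set Q :=
  ⋂₀ {S : Set Q | IsSubloop S ∧ T ⊆ S}

/-- Membership in the smallest subset containing `x` and `y` and closed under
multiplication and inverses. -/
inductive gen2 {Q : Type u} [Mul Q] [Inv Q] (x y : Q) : Q → Prop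
  | fst : gen2 x y x
  | snd : gen2 x y y
  | mul : ∀ {a b : Q}, gen2 x y a → gen2 x y b → gen2 x y (a * b)
  | inv : ∀ {a : Q}, gen2 x y a → gen2 x y a⁻¹

/-- A loop is diassociative if any two elements generate a subgroup: any three
elements of the closure of `{x, y}` under multiplication and inverses associate. -/
def Diassociative (Q : Type u) [Mul Q] [Inv Q] : Prop :=
  ∀ x y a b c : Q, gen2 x y a → gen2 x y b → gen2 x y c → a * (b * c) = (a * b) * c

/-- The center of a loop: elements commuting and associating with everything. -/
def center (Q : Type u) [Mul Q] : Set Q :=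
  {a : Q | ∀ x y : Q, a * x = x * a ∧ a * (x * y) = (a * x) * y ∧
    x * (a * y) = (x * a) * y ∧ x * (y * a) = (x * y) * a}

-- ===== infrastructure =====

class CDL (Q : Type u) extends InvLoop Q where
  comm : ∀ x y : Q, x * y = y * x
  di : Diassociative Q
  tor : Torsion Q

variable {Q : Type u} [CDL Q]

theorem loop_mul_left_cancel {a b c : Q} (h : a * b = a * c) : b = c :=
  (Loop.mulLeft_bijective a).injective h

theorem gen2_one (x y : Q) : gen2 x y (1 : Q) := by
  have h := gen2.mul (gen2.fst (x := x) (y := y)) (gen2.inv gen2.fst)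
  rwa [InvLoop.mul_inv] at h

theorem gen2_lpow {x y a : Q} (h : gen2 x y a) : ∀ m, gen2 x y (lpow a m)
  | 0 => gen2_one x y
  | m + 1 => gen2.mul (gen2_lpow h m) h

def Grp (x y : Q) : Type u := {q : Q // gen2 x y q}

namespace Grp

variable {x y : Q}

instance : Mul (Grp x y) := ⟨fun a b => ⟨a.1 * b.1, gen2.mul a.2 b.2⟩⟩
instance : One (Grp x y) := ⟨⟨1, gen2_one x y⟩⟩
instance : Inv (Grp x y) := ⟨fun a => ⟨a.1⁻¹, gen2.inv a.2⟩⟩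

noncomputable instance : CommGroup (Grp x y) where
  mul_assoc a b c := Subtype.ext (CDL.di x y a.1 b.1 c.1 a.2 b.2 c.2).symm
  one_mul a := Subtype.ext (Loop.one_mul a.1)
  mul_one a := Subtype.ext (Loop.mul_one a.1)
  inv_mul_cancel a := Subtype.ext (InvLoop.inv_mul a.1)
  mul_comm a b := Subtype.ext (CDL.comm a.1 b.1)

@[simp] theorem val_mul (a b : Grp x y) : (a * b).1 = a.1 * b.1 := rfl
@[simp] theorem val_one : (1 : Grp x y).1 = 1 := rfl
@[simp] theorem val_inv (a : Grp x y) : (a⁻¹).1 = a.1⁻¹ := rfl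

@[simp] theorem val_pow (g : Grp x y) : ∀ m : ℕ, (g ^ m).1 = lpow g.1 m
  | 0 => by rw [pow_zero]; rfl
  | m + 1 => by rw [pow_succ, val_mul, val_pow g m]; rfl

theorem isOfFinOrder (g : Grp x y) : IsOfFinOrder g := by
  obtain ⟨m, hm, h1⟩ := CDL.tor g.1
  exact isOfFinOrder_iff_pow_eq_one.mpr ⟨m, hm, Subtype.ext (by rw [val_pow]; exact h1)⟩

theorem ord_val (g : Grp x y) : ord g.1 = orderOf g := by
  refine le_antisymm (Nat.sInf_le ⟨g.isOfFinOrder.orderOf_pos, ?_⟩) ?_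
  · have := pow_orderOf_eq_one g
    have := congrArg Subtype.val this
    rwa [val_pow] at this
  · obtain ⟨m, hm, h1⟩ := CDL.tor g.1
    have hmem : ord g.1 ∈ {n : ℕ | 0 < n ∧ lpow g.1 n = 1} := Nat.sInf_mem ⟨m, hm, h1⟩
    exact orderOf_le_of_pow_eq_one hmem.1 (Subtype.ext (by rw [val_pow]; exact hmem.2))

end Grp

noncomputable def toGrp {x y : Q} (a : Q) (h : gen2 x y a) : Grp x y := ⟨a, h⟩

theorem ord_pos (z : Q) : 0 < ord z := by
  have := (toGrp z (gen2.fst (y := z))).isOfFinOrder.orderOf_pos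
  rwa [← Grp.ord_val] at this

theorem lpow_eq_one_iff {z : Q} {m : ℕ} : lpow z m = 1 ↔ ord z ∣ m := by
  set g := toGrp z (gen2.fst (y := z))
  have h1 : lpow z m = (g ^ m).1 := (Grp.val_pow g m).symm
  rw [h1, show ord z = orderOf g from Grp.ord_val g]
  constructor
  · intro h; exact orderOf_dvd_iff_pow_eq_one.mpr (Subtype.ext h)
  · intro h; rw [orderOf_dvd_iff_pow_eq_one.mp h]; rfl

theorem lpow_one' (z : Q) : lpow z 1 = z := by
  show (1 : Q) * z = z; exact Loop.one_mul z

theorem lpow_ord (z : Q) : lpow z (ord z) = 1 :=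
  lpow_eq_one_iff.mpr dvd_rfl

theorem eq_one_of_ord_eq_one {z : Q} (h : ord z = 1) : z = 1 := by
  have hd : ord z ∣ 1 := by rw [h]
  have := lpow_eq_one_iff.mpr hd
  rwa [lpow_one'] at this

theorem ord_one : ord (1 : Q) = 1 := by
  have hg : (toGrp (1 : Q) (gen2.fst (y := (1 : Q)))) = (1 : Grp (1 : Q) (1 : Q)) :=
    Subtype.ext rfl
  have := Grp.ord_val (toGrp (1 : Q) (gen2.fst (y := (1 : Q))))
  rw [hg, orderOf_one] at this
  exact this

theorem ord_inv (z : Q) : ord z⁻¹ = ord z := by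
  have h1 : ord z⁻¹ = orderOf ((toGrp z (gen2.fst (y := z)))⁻¹) :=
    Grp.ord_val ((toGrp z (gen2.fst (y := z)))⁻¹)
  rw [h1, orderOf_inv]
  exact (Grp.ord_val (toGrp z (gen2.fst (y := z)))).symm

theorem ord_mul_dvd (x y : Q) : ord (x * y) ∣ Nat.lcm (ord x) (ord y) := by
  set gx := toGrp x (gen2.fst (y := y))
  set gy := toGrp y (gen2.snd (x := x))
  have h1 : ord (x * y) = orderOf (gx * gy) := Grp.ord_val (gx * gy)
  rw [h1, orderOf_dvd_iff_pow_eq_one, mul_pow]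
  rw [orderOf_dvd_iff_pow_eq_one.mp (by rw [← Grp.ord_val]; exact Nat.dvd_lcm_left _ _),
      orderOf_dvd_iff_pow_eq_one.mp (by rw [← Grp.ord_val]; exact Nat.dvd_lcm_right _ _), one_mul]

theorem lpow_add (z : Q) (A B : ℕ) : lpow z (A + B) = lpow z A * lpow z B := by
  set g := toGrp z (gen2.fst (y := z))
  have := congrArg Subtype.val (pow_add g A B)
  rwa [Grp.val_pow, Grp.val_mul, Grp.val_pow, Grp.val_pow] at this

theorem lpow_mul' (z : Q) (A B : ℕ) : lpow z (A * B) = lpow (lpow z A) B := by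
  set g := toGrp z (gen2.fst (y := z))
  have h := congrArg Subtype.val (pow_mul g A B)
  simp only [Grp.val_pow] at h
  exact h

theorem lpow_one_base (A : ℕ) : lpow (1 : Q) A = 1 := by
  induction A with
  | zero => rfl
  | succ n ih => show lpow (1 : Q) n * 1 = 1; rw [Loop.mul_one, ih]

theorem lpow_mod (z : Q) (A : ℕ) : lpow z A = lpow z (A % ord z) := by
  conv_lhs => rw [← Nat.mod_add_div A (ord z)]
  rw [lpow_add, lpow_mul', lpow_ord, lpow_one_base, Loop.mul_one]

theorem lpow_modEq {z : Q} {A B : ℕ} (h : A ≡ B [MOD ord z]) : lpow z A = lpow z B := by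
  rw [lpow_mod z A, lpow_mod z B, h]

theorem ord_lpow_dvd (z : Q) (A : ℕ) : ord (lpow z A) ∣ ord z := by
  set g := toGrp z (gen2.fst (y := z))
  have h1 : ord (lpow z A) = orderOf (g ^ A) := by
    have := Grp.ord_val (g ^ A); rwa [Grp.val_pow] at this
  rw [h1, show ord z = orderOf g from Grp.ord_val g]
  exact orderOf_pow_dvd A

-- ===== center lemmas =====

theorem one_mem_center : (1 : Q) ∈ center Q := by
  intro x y
  refine ⟨by rw [Loop.one_mul, Loop.mul_one], by rw [Loop.one_mul, Loop.one_mul], ?_, ?_⟩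
  · rw [Loop.one_mul, Loop.mul_one]
  · rw [Loop.mul_one, Loop.mul_one]

theorem mul_mem_center {a b : Q} (ha : a ∈ center Q) (hb : b ∈ center Q) :
    a * b ∈ center Q := by
  intro x y
  refine ⟨CDL.comm _ _, ?_, ?_, ?_⟩
  · -- (a*b)*(x*y) = ((a*b)*x)*y
    rw [← (ha b (x * y)).2.1, (hb x y).2.1, (ha (b * x) y).2.1, (ha b x).2.1]
  · -- x*((a*b)*y) = (x*(a*b))*y
    rw [← (ha b y).2.1, (ha x (b * y)).2.2.1, (hb (x * a) y).2.2.1, ← (hb x a).2.2.2]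
  · -- x*(y*(a*b)) = (x*y)*(a*b)
    rw [(hb y a).2.2.2, (hb x (y * a)).2.2.2, (ha x y).2.2.2, ← (hb (x * y) a).2.2.2]

theorem lpow_mem_center {z : Q} (hz : z ∈ center Q) : ∀ m, lpow z m ∈ center Q
  | 0 => one_mem_center
  | m + 1 => mul_mem_center (lpow_mem_center hz m) hz

-- ===== primary part decomposition =====

noncomputable def sExp (p m : ℕ) : ℕ := (ordCompl[p] m) ^ (Nat.totient (ordProj[p] m))
noncomputable def tExp (p m : ℕ) : ℕ := (ordProj[p] m) ^ (Nat.totient (ordCompl[p] m))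

noncomputable def pPart (p : ℕ) (z : Q) : Q := lpow z (sExp p (ord z))
noncomputable def pCoPart (p : ℕ) (z : Q) : Q := lpow z (tExp p (ord z))

section pPartFacts

variable {p : ℕ} (z : Q)

theorem ord_ne_zero (z : Q) : ord z ≠ 0 := (ord_pos z).ne'

theorem sExp_add_tExp_modEq (hp : p.Prime) : sExp p (ord z) + tExp p (ord z) ≡ 1 [MOD ord z] := by
  set m := ord z
  have hm : m ≠ 0 := ord_ne_zero z
  have hcop : Nat.Coprime (ordProj[p] m) (ordCompl[p] m) :=
    Nat.Coprime.pow_left _ (Nat.coprime_ordCompl hp hm)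
  have h1 : 0 < Nat.totient (ordProj[p] m) := Nat.totient_pos.mpr (Nat.ordProj_pos m p)
  have h2 : 0 < Nat.totient (ordCompl[p] m) :=
    Nat.totient_pos.mpr (Nat.ordCompl_pos p hm)
  have hs1 : sExp p m ≡ 1 [MOD ordProj[p] m] :=
    Nat.ModEq.pow_totient hcop.symm
  have hs0 : sExp p m ≡ 0 [MOD ordCompl[p] m] :=
    (Nat.modEq_zero_iff_dvd).mpr (dvd_pow_self _ h1.ne')
  have ht0 : tExp p m ≡ 0 [MOD ordProj[p] m] :=
    (Nat.modEq_zero_iff_dvd).mpr (dvd_pow_self _ h2.ne')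
  have ht1 : tExp p m ≡ 1 [MOD ordCompl[p] m] :=
    Nat.ModEq.pow_totient hcop
  have hmod1 : sExp p m + tExp p m ≡ 1 + 0 [MOD ordProj[p] m] := hs1.add ht0
  have hmod2 : sExp p m + tExp p m ≡ 0 + 1 [MOD ordCompl[p] m] := hs0.add ht1
  rw [Nat.add_zero] at hmod1
  rw [Nat.zero_add] at hmod2
  have := (Nat.modEq_and_modEq_iff_modEq_mul hcop).mp ⟨hmod1, hmod2⟩
  rwa [Nat.ordProj_mul_ordCompl_eq_self] at this

theorem pPart_mul_pCoPart (hp : p.Prime) : pPart p z * pCoPart p z = z := by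
  rw [pPart, pCoPart, ← lpow_add]
  rw [lpow_modEq (sExp_add_tExp_modEq z hp), lpow_one']

theorem ord_pPart_dvd : ord (pPart p z) ∣ ordProj[p] (ord z) := by
  rw [← lpow_eq_one_iff (z := pPart p z), pPart, ← lpow_mul']
  apply lpow_eq_one_iff.mpr
  rw [sExp]
  have h1 : 0 < Nat.totient (ordProj[p] (ord z)) :=
    Nat.totient_pos.mpr (Nat.ordProj_pos (ord z) p)
  calc ord z = ordProj[p] (ord z) * ordCompl[p] (ord z) :=
        (Nat.ordProj_mul_ordCompl_eq_self _ _).symm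
    _ ∣ (ordCompl[p] (ord z)) ^ (Nat.totient (ordProj[p] (ord z))) * ordProj[p] (ord z) := by
        rw [mul_comm]
        exact Nat.mul_dvd_mul_right (dvd_pow_self _ h1.ne') _

theorem pPart_isPrimary (hp : p.Prime) : ∃ k, ord (pPart p z) = p ^ k := by
  obtain ⟨k, -, hk⟩ := (Nat.dvd_prime_pow hp).mp (ord_pPart_dvd z)
  exact ⟨k, hk⟩

theorem ord_pCoPart_dvd : ord (pCoPart p z) ∣ ordCompl[p] (ord z) := by
  rw [← lpow_eq_one_iff (z := pCoPart p z), pCoPart, ← lpow_mul']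
  apply lpow_eq_one_iff.mpr
  rw [tExp]
  have h2 : 0 < Nat.totient (ordCompl[p] (ord z)) :=
    Nat.totient_pos.mpr (Nat.ordCompl_pos p (ord_ne_zero z))
  calc ord z = ordProj[p] (ord z) * ordCompl[p] (ord z) :=
        (Nat.ordProj_mul_ordCompl_eq_self _ _).symm
    _ ∣ (ordProj[p] (ord z)) ^ (Nat.totient (ordCompl[p] (ord z))) * ordCompl[p] (ord z) :=
        Nat.mul_dvd_mul_right (dvd_pow_self _ h2.ne') _

theorem pCoPart_coprime (hp : p.Prime) : Nat.Coprime p (ord (pCoPart p z)) :=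
  Nat.Coprime.coprime_dvd_right (ord_pCoPart_dvd z)
    (Nat.coprime_ordCompl hp (ord_ne_zero z))

theorem ord_pCoPart_dvd_ord : ord (pCoPart p z) ∣ ord z :=
  ord_lpow_dvd z _

theorem pCoPart_eq_one (hp : p.Prime) {k : ℕ} (hk : ord z = p ^ k) : pCoPart p z = 1 := by
  apply lpow_eq_one_iff.mpr
  have h1 : ordProj[p] (ord z) = ord z := by
    rw [hk, hp.factorization_pow, Finsupp.single_eq_same]
  rw [tExp, h1, Nat.div_self (ord_pos z), Nat.totient_one, pow_one]

end pPartFacts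

-- ===== uniqueness of p-decompositions in a commutative group =====

theorem commGroup_orderOf_mul_dvd {A : Type*} [CommGroup A] (a b : A) :
    orderOf (a * b) ∣ Nat.lcm (orderOf a) (orderOf b) := by
  rw [orderOf_dvd_iff_pow_eq_one, mul_pow,
    orderOf_dvd_iff_pow_eq_one.mp (Nat.dvd_lcm_left _ _),
    orderOf_dvd_iff_pow_eq_one.mp (Nat.dvd_lcm_right _ _), one_mul]

theorem unique_pdecomp {A : Type*} [CommGroup A] {p : ℕ} (hp : p.Prime)
    {u v u' v' : A} (h : u * v = u' * v')
    (hu : ∃ i, orderOf u = p ^ i) (hu' : ∃ i, orderOf u' = p ^ i)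
    (hv : Nat.Coprime p (orderOf v)) (hv' : Nat.Coprime p (orderOf v')) :
    u = u' ∧ v = v' := by
  obtain ⟨i, hi⟩ := hu
  obtain ⟨j, hj⟩ := hu'
  have key : u * (v * v'⁻¹) = u' := by
    rw [← mul_assoc, h, mul_assoc, mul_inv_cancel, mul_one]
  set w := v * v'⁻¹ with hw
  have hw1 : w = u⁻¹ * u' := by rw [← key]; group
  -- w has p-power order
  have hwp : orderOf w ∣ p ^ (i + j) := by
    rw [hw1]
    refine (commGroup_orderOf_mul_dvd u⁻¹ u').trans (Nat.lcm_dvd ?_ ?_)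
    · rw [orderOf_inv, hi]; exact pow_dvd_pow p (Nat.le_add_right i j)
    · rw [hj]; exact pow_dvd_pow p (Nat.le_add_left j i)
  -- w has order coprime to p
  have hwc : Nat.Coprime p (orderOf w) := by
    have h1 : orderOf w ∣ orderOf v * orderOf v' := by
      refine (commGroup_orderOf_mul_dvd v v'⁻¹).trans ?_
      rw [orderOf_inv]
      exact Nat.lcm_dvd (dvd_mul_right _ _) (dvd_mul_left _ _)
    exact Nat.Coprime.coprime_dvd_right h1 (hv.mul_right hv')
  have hw2 : orderOf w = 1 := by
    obtain ⟨k, -, hk⟩ := (Nat.dvd_prime_pow hp).mp hwp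
    rcases Nat.eq_zero_or_pos k with hk0 | hk0
    · rw [hk, hk0, pow_zero]
    · exfalso
      have : p ∣ orderOf w := hk ▸ dvd_pow_self p hk0.ne'
      have := Nat.eq_one_of_dvd_coprimes hwc dvd_rfl this
      exact hp.one_lt.ne' this
  have hweq : w = 1 := orderOf_eq_one_iff.mp hw2
  have hv'' : v = v' := by
    have h2 := hweq
    rw [hw] at h2
    exact mul_inv_eq_one.mp h2
  refine ⟨?_, hv''⟩
  rw [← key, hweq, mul_one]

-- ===== multiplicativity of the primary projections =====

theorem pPart_pCoPart_mul {p : ℕ} (hp : p.Prime) (z w : Q) :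
    pPart p (z * w) = pPart p z * pPart p w ∧
      pCoPart p (z * w) = pCoPart p z * pCoPart p w := by
  set gz : Grp z w := toGrp z gen2.fst with hgz
  set gw : Grp z w := toGrp w gen2.snd with hgw
  set U : Grp z w := gz ^ sExp p (ord z) * gw ^ sExp p (ord w) with hU
  set V : Grp z w := gz ^ tExp p (ord z) * gw ^ tExp p (ord w) with hV
  have hzw : gen2 z w (z * w) := gen2.mul gen2.fst gen2.snd
  set U' : Grp z w := toGrp (pPart p (z * w)) (gen2_lpow hzw _) with hU'
  set V' : Grp z w := toGrp (pCoPart p (z * w)) (gen2_lpow hzw _) with hV'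
  -- value computations
  have hvUz : (gz ^ sExp p (ord z)).1 = pPart p z := Grp.val_pow gz _
  have hvUw : (gw ^ sExp p (ord w)).1 = pPart p w := Grp.val_pow gw _
  have hvVz : (gz ^ tExp p (ord z)).1 = pCoPart p z := Grp.val_pow gz _
  have hvVw : (gw ^ tExp p (ord w)).1 = pCoPart p w := Grp.val_pow gw _
  -- the two decompositions multiply to the same element
  have hUV : U' * V' = U * V := by
    have h1 : U * V = (gz ^ sExp p (ord z) * gz ^ tExp p (ord z)) *
        (gw ^ sExp p (ord w) * gw ^ tExp p (ord w)) := by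
      rw [hU, hV, mul_mul_mul_comm]
    apply Subtype.ext
    rw [h1]
    show pPart p (z * w) * pCoPart p (z * w) =
      ((gz ^ sExp p (ord z)).1 * (gz ^ tExp p (ord z)).1) *
        ((gw ^ sExp p (ord w)).1 * (gw ^ tExp p (ord w)).1)
    rw [hvUz, hvUw, hvVz, hvVw, pPart_mul_pCoPart _ hp, pPart_mul_pCoPart _ hp,
      pPart_mul_pCoPart _ hp]
  -- order facts
  have oU' : ∃ i, orderOf U' = p ^ i := by
    obtain ⟨i, hi⟩ := pPart_isPrimary (z * w) hp
    exact ⟨i, by rw [← Grp.ord_val U']; exact hi⟩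
  have oV' : Nat.Coprime p (orderOf V') := by
    rw [← Grp.ord_val V']
    exact pCoPart_coprime (z * w) hp
  have oU : ∃ i, orderOf U = p ^ i := by
    obtain ⟨i, hi⟩ := pPart_isPrimary z hp
    obtain ⟨j, hj⟩ := pPart_isPrimary w hp
    have h1 : orderOf (gz ^ sExp p (ord z)) = p ^ i := by
      rw [← Grp.ord_val, hvUz]; exact hi
    have h2 : orderOf (gw ^ sExp p (ord w)) = p ^ j := by
      rw [← Grp.ord_val, hvUw]; exact hj
    have h3 : orderOf U ∣ p ^ (i + j) := by
      refine (commGroup_orderOf_mul_dvd _ _).trans (Nat.lcm_dvd ?_ ?_)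
      · rw [h1]; exact pow_dvd_pow p (Nat.le_add_right i j)
      · rw [h2]; exact pow_dvd_pow p (Nat.le_add_left j i)
    obtain ⟨k, -, hk⟩ := (Nat.dvd_prime_pow hp).mp h3
    exact ⟨k, hk⟩
  have oV : Nat.Coprime p (orderOf V) := by
    have h1 : Nat.Coprime p (orderOf (gz ^ tExp p (ord z))) := by
      rw [← Grp.ord_val, hvVz]; exact pCoPart_coprime z hp
    have h2 : Nat.Coprime p (orderOf (gw ^ tExp p (ord w))) := by
      rw [← Grp.ord_val, hvVw]; exact pCoPart_coprime w hp
    have h3 : orderOf V ∣ orderOf (gz ^ tExp p (ord z)) * orderOf (gw ^ tExp p (ord w)) :=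
      (commGroup_orderOf_mul_dvd _ _).trans
        (Nat.lcm_dvd (dvd_mul_right _ _) (dvd_mul_left _ _))
    exact Nat.Coprime.coprime_dvd_right h3 (h1.mul_right h2)
  obtain ⟨hu, hv⟩ := unique_pdecomp hp hUV oU' oU oV' oV
  constructor
  · have := congrArg Subtype.val hu
    rw [show (U'.1 = pPart p (z * w)) from rfl] at this
    rw [this, Grp.val_mul, hvUz, hvUw]
  · have := congrArg Subtype.val hv
    rw [show (V'.1 = pCoPart p (z * w)) from rfl] at this
    rw [this, Grp.val_mul, hvVz, hvVw]

-- ===== subloops =====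

theorem isSubloop_genSubloop {T : Set Q} : IsSubloop (genSubloop T) := by
  refine ⟨?_, ?_, ?_⟩
  · intro S hS; exact hS.1.1
  · intro a ha b hb S hS; exact hS.1.2.1 a (ha S hS) b (hb S hS)
  · intro a ha S hS; exact hS.1.2.2 a (ha S hS)

theorem subset_genSubloop {T : Set Q} : T ⊆ genSubloop T := by
  intro a ha S hS; exact hS.2 ha

theorem genSubloop_subset {T S : Set Q} (hS : IsSubloop S) (hTS : T ⊆ S) :
    genSubloop T ⊆ S :=
  Set.sInter_subset_of_mem ⟨hS, hTS⟩

theorem isSubloop_primary {p : ℕ} (hp : p.Prime) : IsSubloop (primary Q p) := by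
  refine ⟨⟨0, by rw [ord_one, pow_zero]⟩, ?_, ?_⟩
  · rintro a ⟨i, hi⟩ b ⟨j, hj⟩
    have h1 : ord (a * b) ∣ p ^ (i + j) := by
      refine (ord_mul_dvd a b).trans (Nat.lcm_dvd ?_ ?_)
      · rw [hi]; exact pow_dvd_pow p (Nat.le_add_right i j)
      · rw [hj]; exact pow_dvd_pow p (Nat.le_add_left j i)
    obtain ⟨k, -, hk⟩ := (Nat.dvd_prime_pow hp).mp h1
    exact ⟨k, hk⟩
  · rintro a ⟨i, hi⟩
    exact ⟨i, by rw [ord_inv]; exact hi⟩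

theorem isSubloop_coprimePart {n : ℕ} : IsSubloop {x : Q | Nat.Coprime (ord x) n} := by
  refine ⟨?_, ?_, ?_⟩
  · show Nat.Coprime (ord (1 : Q)) n
    rw [ord_one]; exact Nat.coprime_one_left n
  · intro a ha b hb
    show Nat.Coprime (ord (a * b)) n
    have h1 : ord (a * b) ∣ ord a * ord b :=
      (ord_mul_dvd a b).trans (Nat.lcm_dvd (dvd_mul_right _ _) (dvd_mul_left _ _))
    exact Nat.Coprime.coprime_dvd_left h1 (Nat.Coprime.mul ha hb)
  · intro a ha
    show Nat.Coprime (ord a⁻¹) n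
    rw [ord_inv]; exact ha

-- ===== centrality lemmas =====

theorem mem_center_of_lpow_eq {x : Q} {N c : ℕ} (hc : lpow x N ∈ center Q)
    (h : N * c ≡ 1 [MOD ord x]) : x ∈ center Q := by
  have h1 : lpow x (N * c) = x := by rw [lpow_modEq h, lpow_one']
  rw [← h1, lpow_mul']
  exact lpow_mem_center hc c

theorem central_of_ord_coprime {x : Q} {n : ℕ} (hn : 0 < n)
    (hcen : lpow x n ∈ center Q) (hx : Nat.Coprime (ord x) n) : x ∈ center Q := by
  have hcop : Nat.Coprime n (ord x) := hx.symm
  have hT : 0 < Nat.totient (ord x) := Nat.totient_pos.mpr (ord_pos x)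
  have hmu : n ^ Nat.totient (ord x) ≡ 1 [MOD ord x] := Nat.ModEq.pow_totient hcop
  refine mem_center_of_lpow_eq hcen (c := n ^ (Nat.totient (ord x) - 1)) ?_
  have : n * n ^ (Nat.totient (ord x) - 1) = n ^ Nat.totient (ord x) := by
    rw [← pow_succ']
    congr 1
    omega
  rwa [this]


/-- Decomposition of a torsion commutative diassociative loop with central
`n`-th powers, where `n = p 0 ^ a 0 * ⋯ * p (k-1) ^ a (k-1)` is a prime
factorization of `n`. -/
theorem statement1 (Q : Type u) [InvLoop Q]
    (hcomm : ∀ x y : Q, x * y = y * x)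
    (hdi : Diassociative Q)
    (htor : Torsion Q)
    (n : ℕ) (hn : 0 < n)
    (k : ℕ) (p a : Fin k → ℕ)
    (hp : ∀ i, (p i).Prime)
    (ha : ∀ i, 0 < a i)
    (hpinj : Function.Injective p)
    (hfac : n = ∏ i, p i ^ a i)
    (hcen : ∀ x : Q, lpow x n ∈ center Q)
    (Q' : Set Q) (hQ' : Q' = {x : Q | Nat.Coprime (ord x) n})
    (F : Option (Fin k) → Set Q)
    (hFnone : F none = Q')
    (hFsome : ∀ i, F (some i) = primary Q (p i)) :
    (∀ i, ∀ x ∈ primary Q (p i), lpow x (p i ^ a i) ∈ center Q) ∧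
    (∀ x : Q, Nat.Coprime (ord x) n → x ∈ center Q) ∧
    IsSubloop Q' ∧
    (∀ x ∈ Q', ∀ y ∈ Q', ∀ z ∈ Q', x * (y * z) = (x * y) * z) ∧
    (∀ o, IsNormalSubloop (F o)) ∧
    (∀ o, F o ∩ genSubloop (⋃ o' ∈ {o' : Option (Fin k) | o' ≠ o}, F o') = {1}) ∧
    genSubloop (⋃ o, F o) = Set.univ := by
  letI : CDL Q := { comm := hcomm, di := hdi, tor := htor }
  -- distinct primes are coprime
  have hpcop : ∀ i j : Fin k, i ≠ j → Nat.Coprime (p i) (p j) := by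
    intro i j hij
    rw [Nat.coprime_primes (hp i) (hp j)]
    exact fun h => hij (hpinj h)
  -- `p i ∣ n`
  have hpdvd : ∀ i : Fin k, p i ∣ n := by
    intro i
    rw [hfac]
    exact (dvd_pow_self (p i) (ha i).ne').trans
      (Finset.dvd_prod_of_mem (fun j => p j ^ a j) (Finset.mem_univ i))
  -- ===== part (a) =====
  have partA : ∀ i, ∀ x ∈ primary Q (p i), lpow x (p i ^ a i) ∈ center Q := by
    rintro i x ⟨κ, hκ⟩
    set m : ℕ := ∏ j ∈ Finset.univ.erase i, p j ^ a j with hm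
    have hfac' : n = p i ^ a i * m := by
      rw [hfac, hm]
      exact (Finset.mul_prod_erase Finset.univ (fun j => p j ^ a j) (Finset.mem_univ i)).symm
    have hcopm : Nat.Coprime (p i) m := by
      refine Nat.Coprime.prod_right ?_
      intro j hj
      exact (hpcop i j (fun h => (Finset.mem_erase.mp hj).1 h.symm)).pow_right _
    have hcop : Nat.Coprime m (ord x) := by
      rw [hκ]
      exact ((hcopm.pow_left κ).symm)
    have hT : 0 < Nat.totient (ord x) := Nat.totient_pos.mpr (ord_pos x)
    have hmu : m ^ Nat.totient (ord x) ≡ 1 [MOD ord x] := Nat.ModEq.pow_totient hcop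
    have hmod : p i ^ a i * m ^ Nat.totient (ord x) ≡ p i ^ a i * 1 [MOD ord x] :=
      Nat.ModEq.mul_left _ hmu
    rw [Nat.mul_one] at hmod
    have h1 : lpow x (p i ^ a i) = lpow x (p i ^ a i * m ^ Nat.totient (ord x)) :=
      (lpow_modEq hmod).symm
    have h2 : p i ^ a i * m ^ Nat.totient (ord x) = n * m ^ (Nat.totient (ord x) - 1) := by
      rw [hfac']
      have : m ^ Nat.totient (ord x) = m * m ^ (Nat.totient (ord x) - 1) := by
        rw [← pow_succ']
        congr 1
        omega
      rw [this, mul_assoc]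
    rw [h1, h2, lpow_mul']
    exact lpow_mem_center (hcen x) _
  -- ===== part (b) =====
  have partB : ∀ x : Q, Nat.Coprime (ord x) n → x ∈ center Q := by
    intro x hx
    exact central_of_ord_coprime hn (hcen x) hx
  have hQ'sub : IsSubloop Q' := by
    rw [hQ']
    exact isSubloop_coprimePart
  have hQ'central : ∀ x ∈ Q', x ∈ center Q := by
    intro x hx
    rw [hQ'] at hx
    exact partB x hx
  have partB2 : ∀ x ∈ Q', ∀ y ∈ Q', ∀ z ∈ Q', x * (y * z) = (x * y) * z := by
    intro x hx y _ z _
    exact ((hQ'central x hx) y z).2.1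
  -- ===== normality =====
  have hFsub : ∀ o, IsSubloop (F o) := by
    intro o
    match o with
    | none => rw [hFnone]; exact hQ'sub
    | some i => rw [hFsome]; exact isSubloop_primary (hp i)
  have partC1 : ∀ o, IsNormalSubloop (F o) := by
    intro o
    refine ⟨hFsub o, ?_⟩
    match o with
    | none =>
      intro b hb x y d hd
      rw [hFnone] at hb ⊢
      have hbc : b ∈ center Q := hQ'central b hb
      rw [(hbc x y).2.2.2] at hd
      have hdb : d = b := loop_mul_left_cancel hd
      rw [hdb]
      exact hb
    | some i =>
      intro b hb x y d hd
      rw [hFsome] at hb ⊢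
      obtain ⟨κ, hκ⟩ := hb
      have h1 := (pPart_pCoPart_mul (hp i) (x * y) d).2
      have h2 := (pPart_pCoPart_mul (hp i) x y).2
      have h3 := (pPart_pCoPart_mul (hp i) x (y * b)).2
      have h4 := (pPart_pCoPart_mul (hp i) y b).2
      have h5 : pCoPart (p i) b = 1 := pCoPart_eq_one b (hp i) hκ
      rw [hd, h3, h4, h5, Loop.mul_one] at h1
      rw [h2] at h1
      -- h1 : (Cx * Cy) * Cd = Cx * Cy
      have h6 : (pCoPart (p i) x * pCoPart (p i) y) * pCoPart (p i) d =
          (pCoPart (p i) x * pCoPart (p i) y) * 1 := by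
        rw [Loop.mul_one]
        exact h1.symm
      have h7 : pCoPart (p i) d = 1 := loop_mul_left_cancel h6
      have h8 : d = pPart (p i) d := by
        conv_lhs => rw [← pPart_mul_pCoPart d (hp i)]
        rw [h7, Loop.mul_one]
      obtain ⟨κ', hκ'⟩ := pPart_isPrimary d (hp i)
      exact ⟨κ', by rw [h8]; exact hκ'⟩
  -- ===== trivial intersections =====
  have partC2 : ∀ o, F o ∩ genSubloop (⋃ o' ∈ {o' : Option (Fin k) | o' ≠ o}, F o') = {1} := by
    intro o
    ext t
    simp only [Set.mem_inter_iff, Set.mem_singleton_iff]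
    constructor
    · rintro ⟨htF, htG⟩
      match o with
      | some i =>
        have hbound : genSubloop (⋃ o' ∈ {o' : Option (Fin k) | o' ≠ some i}, F o') ⊆
            {y : Q | Nat.Coprime (ord y) (p i)} := by
          apply genSubloop_subset isSubloop_coprimePart
          intro y hy
          simp only [Set.mem_iUnion, Set.mem_setOf_eq] at hy
          obtain ⟨o', ho', hyF⟩ := hy
          match o' with
          | none =>
            rw [hFnone, hQ'] at hyF
            exact Nat.Coprime.coprime_dvd_right (hpdvd i) hyF
          | some j =>
            have hji : j ≠ i := fun h => ho' (by rw [h])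
            rw [hFsome] at hyF
            obtain ⟨κ, hκ⟩ := hyF
            show Nat.Coprime (ord y) (p i)
            rw [hκ]
            exact (hpcop j i hji).pow_left κ
        have h1 : Nat.Coprime (ord t) (p i) := hbound htG
        rw [hFsome] at htF
        obtain ⟨κ, hκ⟩ := htF
        have hκ0 : κ = 0 := by
          by_contra hne
          have hdvd : p i ∣ ord t := hκ ▸ dvd_pow_self _ hne
          exact (hp i).one_lt.ne' (Nat.eq_one_of_dvd_coprimes h1 hdvd dvd_rfl)
        apply eq_one_of_ord_eq_one
        rw [hκ, hκ0, pow_zero]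
      | none =>
        have hTsub : IsSubloop {y : Q | ∀ q : ℕ, q.Prime → q ∣ ord y → ∃ j, q = p j} := by
          refine ⟨?_, ?_, ?_⟩
          · intro q hq hdvd
            rw [ord_one] at hdvd
            exact absurd (Nat.eq_one_of_dvd_one hdvd) hq.one_lt.ne'
          · intro u hu v hv q hq hdvd
            have h1 : ord (u * v) ∣ ord u * ord v :=
              (ord_mul_dvd u v).trans (Nat.lcm_dvd (dvd_mul_right _ _) (dvd_mul_left _ _))
            rcases (Nat.Prime.dvd_mul hq).mp (hdvd.trans h1) with h | h
            · exact hu q hq h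
            · exact hv q hq h
          · intro u hu q hq hdvd
            rw [ord_inv] at hdvd
            exact hu q hq hdvd
        have hbound : genSubloop (⋃ o' ∈ {o' : Option (Fin k) | o' ≠ none}, F o') ⊆
            {y : Q | ∀ q : ℕ, q.Prime → q ∣ ord y → ∃ j, q = p j} := by
          apply genSubloop_subset hTsub
          intro y hy
          simp only [Set.mem_iUnion, Set.mem_setOf_eq] at hy
          obtain ⟨o', ho', hyF⟩ := hy
          match o' with
          | none => exact absurd rfl ho'
          | some j =>
            rw [hFsome] at hyF
            obtain ⟨κ, hκ⟩ := hyF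
            intro q hq hdvd
            rw [hκ] at hdvd
            exact ⟨j, (Nat.prime_dvd_prime_iff_eq hq (hp j)).mp (hq.dvd_of_dvd_pow hdvd)⟩
        have h1 := hbound htG
        rw [hFnone, hQ'] at htF
        apply eq_one_of_ord_eq_one
        by_contra hne
        obtain ⟨q, hq, hqdvd⟩ := Nat.exists_prime_and_dvd hne
        obtain ⟨j, rfl⟩ := h1 q hq hqdvd
        exact hq.one_lt.ne' (Nat.eq_one_of_dvd_coprimes htF hqdvd (hpdvd j))
    · rintro rfl
      exact ⟨(hFsub o).1, isSubloop_genSubloop.1⟩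
  -- ===== generation =====
  have partC3 : genSubloop (⋃ o, F o) = Set.univ := by
    apply Set.eq_univ_iff_forall.mpr
    intro x
    set G : Set Q := genSubloop (⋃ o, F o) with hG
    have hGsub : IsSubloop G := isSubloop_genSubloop
    have hFoG : ∀ o, F o ⊆ G := by
      intro o
      refine Set.Subset.trans ?_ subset_genSubloop
      exact Set.subset_iUnion F o
    set rem : ℕ → Q :=
      fun j => Nat.rec x (fun i r => if h : i < k then pCoPart (p ⟨i, h⟩) r else r) j
      with hrem
    have hremS : ∀ i (h : i < k), rem (i + 1) = pCoPart (p ⟨i, h⟩) (rem i) := by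
      intro i h
      show (if h' : i < k then pCoPart (p ⟨i, h'⟩) (rem i) else rem i) = _
      rw [dif_pos h]
    have hremdvd : ∀ j, ord (rem (j + 1)) ∣ ord (rem j) := by
      intro j
      by_cases h : j < k
      · rw [hremS j h]
        exact ord_lpow_dvd _ _
      · show ord (if h' : j < k then pCoPart (p ⟨j, h'⟩) (rem j) else rem j) ∣ _
        rw [dif_neg h]
    have hchain : ∀ b c : ℕ, b ≤ c → ord (rem c) ∣ ord (rem b) := by
      intro b c hbc
      induction c, hbc using Nat.le_induction with
      | base => exact dvd_rfl
      | succ c hbc ih => exact (hremdvd c).trans ih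
    have hcop : Nat.Coprime (ord (rem k)) n := by
      rw [hfac]
      apply Nat.Coprime.prod_right
      intro i _
      apply Nat.Coprime.pow_right
      have h1 : Nat.Coprime (p i) (ord (rem (i.val + 1))) := by
        have := hremS i.val i.isLt
        rw [Fin.eta] at this
        rw [this]
        exact pCoPart_coprime _ (hp i)
      exact (Nat.Coprime.coprime_dvd_right (hchain (i.val + 1) k i.isLt) h1).symm
    have hremk : rem k ∈ G := by
      apply hFoG none
      rw [hFnone, hQ']
      exact hcop
    have step : ∀ j (h : j < k), rem (j + 1) ∈ G → rem j ∈ G := by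
      intro j h hmem
      have hdec : pPart (p ⟨j, h⟩) (rem j) * pCoPart (p ⟨j, h⟩) (rem j) = rem j :=
        pPart_mul_pCoPart _ (hp ⟨j, h⟩)
      have h1 : pPart (p ⟨j, h⟩) (rem j) ∈ G := by
        apply hFoG (some ⟨j, h⟩)
        rw [hFsome]
        exact pPart_isPrimary _ (hp ⟨j, h⟩)
      have h2 : pCoPart (p ⟨j, h⟩) (rem j) ∈ G := by
        rw [← hremS j h]
        exact hmem
      have := hGsub.2.1 _ h1 _ h2
      rwa [hdec] at this
    have down : ∀ d : ℕ, rem (k - d) ∈ G := by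
      intro d
      induction d with
      | zero => simpa using hremk
      | succ d ih =>
        by_cases hc : d + 1 ≤ k
        · have he : (k - (d + 1)) + 1 = k - d := by omega
          have hlt : k - (d + 1) < k := by omega
          exact step _ hlt (by rw [he]; exact ih)
        · have he : k - (d + 1) = k - d := by omega
          rw [he]
          exact ih
      
    have hx0 : rem 0 ∈ G := by
      have := down k
      rwa [Nat.sub_self] at this
    exact hx0
  exact ⟨partA, partB, hQ'sub, partB2, partC1, partC2, partC3⟩



end CRIFPaper
end

section
/- Let Q be a flexible, alternative, IP loop. Then M0(Q) ⊆ M1(Q): every element c satisfying (c·(x·y))·c = (c·x)·(y·c) for all x,y also satisfies x·(c·(x·y)) = ((x·c)·x)·y for all x,y. -/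
universe u

namespace CRIFPaper

/-- An inverse property (IP) loop. -/
class IPLoop (Q : Type u) extends Loop Q, Inv Q where
  lip : ∀ x y : Q, x⁻¹ * (x * y) = y
  rip : ∀ x y : Q, (y * x) * x⁻¹ = y

/-- Moufang elements of type `M0`. -/
def M0 (Q : Type u) [Mul Q] : Set Q :=
  {c : Q | ∀ x y : Q, (c * (x * y)) * c = (c * x) * (y * c)}

/-- Moufang elements of type `M1`. -/
def M1 (Q : Type u) [Mul Q] : Set Q :=
  {c : Q | ∀ x y : Q, x * (c * (x * y)) = ((x * c) * x) * y}

/-- Moufang elements of type `M2`. -/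
def M2 (Q : Type u) [Mul Q] : Set Q :=
  {c : Q | ∀ x y : Q, (x * c) * (y * x) = (x * (c * y)) * x}

/-- Moufang elements of type `M3`. -/
def M3 (Q : Type u) [Mul Q] : Set Q :=
  {c : Q | ∀ x y : Q, (x * y) * (c * x) = (x * (y * c)) * x}

/-- C elements. -/
def C0 (Q : Type u) [Mul Q] : Set Q :=
  {c : Q | ∀ x y : Q, x * (c * (c * y)) = ((x * c) * c) * y}


section IPHelpers
variable {Q : Type u} [IPLoop Q]

lemma ip_inv_mul (x : Q) : x⁻¹ * x = 1 := by
  have h := IPLoop.lip x (1 : Q); rwa [Loop.mul_one] at h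

lemma ip_inv_inv (x : Q) : x⁻¹⁻¹ = x := by
  have h := IPLoop.lip x⁻¹ x; rwa [ip_inv_mul, Loop.mul_one] at h

lemma ip_aaip (x y : Q) : (x * y)⁻¹ = y⁻¹ * x⁻¹ := by
  have h1 : (x * y)⁻¹ * x = y⁻¹ := by
    have h := IPLoop.lip (x * y) y⁻¹
    rwa [IPLoop.rip y x] at h
  have h2 := IPLoop.rip x ((x * y)⁻¹)
  rw [h1] at h2
  exact h2.symm

lemma idII (d : Q) (hd : ∀ p q : Q, (d * (p * q)) * d = (d * p) * (q * d))
    (x y : Q) : d * (x * y) = ((d * x) * d) * (d⁻¹ * y) := by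
  have h := hd (x * y) y⁻¹
  rw [IPLoop.rip y x] at h
  have h2 := IPLoop.rip (y⁻¹ * d) (d * (x * y))
  rw [h.symm] at h2
  rw [← h2, ip_aaip, ip_inv_inv]

lemma idI (c : Q) (hc : ∀ p q : Q, (c * (p * q)) * c = (c * p) * (q * c))
    (x y : Q) : (x * y) * c = (x * c⁻¹) * ((c * y) * c) := by
  have h := hc x⁻¹ (x * y)
  rw [IPLoop.lip x y] at h
  have h2 := IPLoop.lip (c * x⁻¹) ((x * y) * c)
  rw [← h] at h2
  rw [← h2, ip_aaip, ip_inv_inv]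

lemma m0_inv (c : Q) (hflex : ∀ x y : Q, x * (y * x) = (x * y) * x)
    (hc : ∀ p q : Q, (c * (p * q)) * c = (c * p) * (q * c))
    (p q : Q) : (c⁻¹ * (p * q)) * c⁻¹ = (c⁻¹ * p) * (q * c⁻¹) := by
  have h := congrArg Inv.inv (hc q⁻¹ p⁻¹)
  rw [ip_aaip (c * (q⁻¹ * p⁻¹)) c, ip_aaip c (q⁻¹ * p⁻¹), ip_aaip q⁻¹ p⁻¹,
      ip_inv_inv, ip_inv_inv, ip_aaip (c * q⁻¹) (p⁻¹ * c), ip_aaip p⁻¹ c,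
      ip_aaip c q⁻¹, ip_inv_inv, ip_inv_inv] at h
  rw [← hflex c⁻¹ (p * q)]
  exact h

end IPHelpers

/-- In a flexible, alternative, IP loop, `M0 ⊆ M1`. -/
theorem statement4 (Q : Type u) [IPLoop Q]
    (hflex : ∀ x y : Q, x * (y * x) = (x * y) * x)
    (hlalt : ∀ x y : Q, x * (x * y) = (x * x) * y)
    (hralt : ∀ x y : Q, (x * y) * y = x * (y * y)) :
    M0 Q ⊆ M1 Q := by
  intro c hc x y
  have hc : ∀ p q : Q, (c * (p * q)) * c = (c * p) * (q * c) := hc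
  show x * (c * (x * y)) = ((x * c) * x) * y
  have hcinv := m0_inv c hflex hc
  have hxw : (x * c) * c⁻¹ = x := IPLoop.rip c x
  have hcz : c * (c⁻¹ * y) = y := by
    have h := IPLoop.lip c⁻¹ y; rwa [ip_inv_inv] at h
  have hf4 : ((c⁻¹ * y) * c⁻¹) * c = c⁻¹ * y := by
    have h := IPLoop.rip c⁻¹ (c⁻¹ * y); rwa [ip_inv_inv] at h
  have step3 : (c * ((x * c) * ((c⁻¹ * y) * c⁻¹))) * c = (c * (x * c)) * (c⁻¹ * y) := by
    rw [hc (x * c) ((c⁻¹ * y) * c⁻¹), hf4]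
  have g2 : c * ((((x * c) * (x * c)) * ((c⁻¹ * y) * c⁻¹)) * c)
      = (c * ((x * c) * (x * c))) * (c⁻¹ * y) := by
    rw [hflex c (((x * c) * (x * c)) * ((c⁻¹ * y) * c⁻¹)),
        hc ((x * c) * (x * c)) ((c⁻¹ * y) * c⁻¹), hf4]
  have g3 : (((x * c) * (x * c)) * ((c⁻¹ * y) * c⁻¹)) * c
      = c⁻¹ * ((c * ((x * c) * (x * c))) * (c⁻¹ * y)) := by
    have h := IPLoop.lip c ((((x * c) * (x * c)) * ((c⁻¹ * y) * c⁻¹)) * c)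
    rw [g2] at h; exact h.symm
  have hR : c⁻¹ * ((c * ((x * c) * (x * c))) * (c⁻¹ * y))
      = (((x * c) * (x * c)) * c⁻¹) * (c * (c⁻¹ * y)) := by
    have h := idII c⁻¹ hcinv (c * ((x * c) * (x * c))) (c⁻¹ * y)
    rwa [IPLoop.lip c ((x * c) * (x * c)), ip_inv_inv] at h
  calc x * (c * (x * y))
      = x * (((c * x) * c) * (c⁻¹ * y)) := by rw [idII c hc x y]
    _ = x * ((c * (x * c)) * (c⁻¹ * y)) := by rw [← hflex c x]
    _ = x * ((c * ((x * c) * ((c⁻¹ * y) * c⁻¹))) * c) := by rw [step3]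
    _ = ((x * c) * c⁻¹) * ((c * ((x * c) * ((c⁻¹ * y) * c⁻¹))) * c) := by rw [hxw]
    _ = ((x * c) * ((x * c) * ((c⁻¹ * y) * c⁻¹))) * c := by
        rw [← idI c hc (x * c) ((x * c) * ((c⁻¹ * y) * c⁻¹))]
    _ = (((x * c) * (x * c)) * ((c⁻¹ * y) * c⁻¹)) * c := by
        rw [hlalt (x * c) ((c⁻¹ * y) * c⁻¹)]
    _ = c⁻¹ * ((c * ((x * c) * (x * c))) * (c⁻¹ * y)) := g3
    _ = (((x * c) * (x * c)) * c⁻¹) * (c * (c⁻¹ * y)) := hR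
    _ = ((x * c) * ((x * c) * c⁻¹)) * (c * (c⁻¹ * y)) := by rw [hlalt (x * c) c⁻¹]
    _ = ((x * c) * x) * y := by rw [hxw, hcz]



end CRIFPaper
end
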